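/- Let α, β > 0 with α − β < 0. Then f(x) = Γ(x+α)/Γ(x+β) is continuously differentiable and strictly decreasing on (−α, ∞), with f(x) → ∞ as x → −α⁺ and f(x) → 0 as x → ∞; hence f is a bijection from (−α, ∞) onto (0, ∞). -/

import Mathlib

open Set Filter Real

lemma myStrictConvexOn_logGamma : StrictConvexOn ℝ (Set.Ioi (0:ℝ)) (Real.log ∘ Real.Gamma) := by
  have h1 : ConvexOn ℝ (Set.Ioi (0:ℝ)) (fun x => Real.log (Real.Gamma (x + 1))) := by
    refine ⟨convex_Ioi _, fun x hx y hy a b ha hb hab => ?_⟩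
    have hx1 : (x + 1 : ℝ) ∈ Set.Ioi (0:ℝ) := by simp only [mem_Ioi] at hx ⊢; linarith
    have hy1 : (y + 1 : ℝ) ∈ Set.Ioi (0:ℝ) := by simp only [mem_Ioi] at hy ⊢; linarith
    have := Real.convexOn_log_Gamma.2 hx1 hy1 ha hb hab
    have harg : a • (x + 1) + b • (y + 1) = (a • x + b • y) + 1 := by
      simp only [smul_eq_mul]; linear_combination hab
    rw [harg] at this
    simpa [smul_eq_mul] using this
  have h2 := h1.sub_strictConcaveOn strictConcaveOn_log_Ioi
  have key : ∀ z ∈ Set.Ioi (0:ℝ),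
      Real.log (Real.Gamma (z + 1)) - Real.log z = (Real.log ∘ Real.Gamma) z := by
    intro z hz
    rw [Function.comp_apply, Real.Gamma_add_one (ne_of_gt hz),
      Real.log_mul (ne_of_gt hz) (Real.Gamma_pos_of_pos hz).ne']
    ring
  refine ⟨h2.1, fun x hx y hy hxy a b ha hb hab => ?_⟩
  have hc : a • x + b • y ∈ Set.Ioi (0:ℝ) := h2.1 hx hy ha.le hb.le hab
  have := h2.2 hx hy hxy ha hb hab
  simp only [Pi.sub_apply] at this
  rw [key _ hc, key _ hx, key _ hy] at this
  exact this

lemma myLogGamma_ineq {a b c d : ℝ} (ha : 0 < a) (hab : a < b) (hbd : b < d)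
    (hac : a < c) (hcd : c < d) (hsum : a + d = b + c) :
    Real.log (Real.Gamma b) + Real.log (Real.Gamma c)
      < Real.log (Real.Gamma a) + Real.log (Real.Gamma d) := by
  set g := Real.log ∘ Real.Gamma
  have had : a < d := hab.trans hbd
  have hd : (0:ℝ) < d := ha.trans had
  set t := (d - b) / (d - a) with htdef
  have hda : 0 < d - a := by linarith
  have ht : 0 < t := div_pos (by linarith) hda
  have h1t : 0 < 1 - t := by
    have : t < 1 := (div_lt_one hda).2 (by linarith)
    linarith
  have hb' : t • a + (1 - t) • d = b := by
    have htm : t * (d - a) = d - b := by rw [htdef]; exact div_mul_cancel₀ _ hda.ne'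
    simp only [smul_eq_mul]; linear_combination (-1 : ℝ) * htm
  have hc' : (1 - t) • a + t • d = c := by
    have htm : t * (d - a) = d - b := by rw [htdef]; exact div_mul_cancel₀ _ hda.ne'
    simp only [smul_eq_mul]; linear_combination htm + hsum
  have k1 := myStrictConvexOn_logGamma.2 (mem_Ioi.2 ha) (mem_Ioi.2 hd) (ne_of_lt had) ht h1t
    (by ring)
  have k2 := myStrictConvexOn_logGamma.2 (mem_Ioi.2 ha) (mem_Ioi.2 hd) (ne_of_lt had) h1t ht
    (by ring)
  rw [hb'] at k1
  rw [hc'] at k2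
  have := add_lt_add k1 k2
  simp only [smul_eq_mul, g, Function.comp_apply] at this ⊢
  nlinarith [this]

lemma myContDiffAt_Gamma {x : ℝ} (hx : 0 < x) : ContDiffAt ℝ 1 Real.Gamma x := by
  have hU : IsOpen {s : ℂ | 0 < s.re} := isOpen_lt continuous_const Complex.continuous_re
  have hd : DifferentiableOn ℂ Complex.Gamma {s : ℂ | 0 < s.re} := by
    intro s hs
    refine (Complex.differentiableAt_Gamma s fun m => ?_).differentiableWithinAt
    intro hsm
    rw [hsm] at hs
    simp only [Set.mem_setOf_eq, Complex.neg_re, Complex.natCast_re] at hs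
    have : (0:ℝ) ≤ m := Nat.cast_nonneg m
    linarith
  have hmem : (x:ℂ) ∈ {s : ℂ | 0 < s.re} := by simpa using hx
  have ha : AnalyticAt ℂ Complex.Gamma (x:ℂ) := hd.analyticAt (hU.mem_nhds hmem)
  have h1 : ContDiffAt ℂ 1 Complex.Gamma (x:ℂ) := ha.contDiffAt.of_le le_top
  have h2 : ContDiffAt ℝ 1 Complex.Gamma (x:ℂ) := h1.restrict_scalars ℝ
  have h3 : ContDiffAt ℝ 1 (fun y : ℝ => Complex.Gamma y) x :=
    h2.comp x (Complex.ofRealCLM.contDiff.contDiffAt.of_le le_top)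
  have h4 : ContDiffAt ℝ 1 (fun y : ℝ => (Complex.Gamma y).re) x :=
    (Complex.reCLM.contDiff.contDiffAt.of_le le_top).comp x h3
  refine h4.congr_of_eventuallyEq (Filter.Eventually.of_forall fun y => ?_)
  show Real.Gamma y = (Complex.Gamma (y:ℂ)).re
  rw [Complex.Gamma_ofReal, Complex.ofReal_re]

lemma myGamma_tendsto_zero : Filter.Tendsto Real.Gamma (nhdsWithin 0 (Set.Ioi 0)) Filter.atTop := by
  have hcont : Filter.Tendsto (fun t : ℝ => Real.Gamma (t + 1)) (nhdsWithin 0 (Set.Ioi 0)) (nhds 1) := by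
    have h1 : Filter.Tendsto (fun t : ℝ => t + 1) (nhdsWithin 0 (Set.Ioi 0)) (nhds 1) := by
      have h0 : Filter.Tendsto (fun t : ℝ => t + 1) (nhds 0) (nhds (0 + 1)) :=
        (continuous_add_right 1).tendsto 0
      rw [zero_add] at h0
      exact h0.mono_left nhdsWithin_le_nhds
    have h2 : ContinuousAt Real.Gamma 1 := (myContDiffAt_Gamma one_pos).continuousAt
    have := h2.tendsto.comp h1
    simpa [Real.Gamma_one, Function.comp_def] using this
  have h3 : Filter.Tendsto (fun t : ℝ => Real.Gamma (t + 1) * t⁻¹) (nhdsWithin 0 (Set.Ioi 0))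
      Filter.atTop := hcont.pos_mul_atTop one_pos tendsto_inv_nhdsGT_zero
  refine h3.congr' ?_
  filter_upwards [self_mem_nhdsWithin] with t ht
  rw [Real.Gamma_add_one (ne_of_gt ht)]
  field_simp
  exact mul_div_cancel_left₀ _ (ne_of_gt (Set.mem_Ioi.1 ht))

/- For α - β < 0, the function x ↦ Γ(x+α)/Γ(x+β) is C¹ and strictly
decreasing on (-α, ∞), tends to ∞ at -α⁺ and to 0 at ∞, and is a bijection
from (-α, ∞) onto (0, ∞). -/
theorem stmt7 (α β : ℝ) (hα : 0 < α) (hβ : 0 < β) (h : α - β < 0) :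
    StrictAntiOn (fun x : ℝ => Real.Gamma (x + α) / Real.Gamma (x + β)) (Set.Ioi (-α)) ∧
    ContDiffOn ℝ 1 (fun x : ℝ => Real.Gamma (x + α) / Real.Gamma (x + β)) (Set.Ioi (-α)) ∧
    Filter.Tendsto (fun x : ℝ => Real.Gamma (x + α) / Real.Gamma (x + β))
      (nhdsWithin (-α) (Set.Ioi (-α))) Filter.atTop ∧
    Filter.Tendsto (fun x : ℝ => Real.Gamma (x + α) / Real.Gamma (x + β))
      Filter.atTop (nhds 0) ∧
    Set.BijOn (fun x : ℝ => Real.Gamma (x + α) / Real.Gamma (x + β))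
      (Set.Ioi (-α)) (Set.Ioi 0) := by
  have hαβ : α < β := by linarith
  set f : ℝ → ℝ := fun x => Real.Gamma (x + α) / Real.Gamma (x + β) with hf
  have hpos : ∀ x : ℝ, x ∈ Set.Ioi (-α) → 0 < x + α := fun x hx => by
    simp only [Set.mem_Ioi] at hx; linarith
  have hposb : ∀ x : ℝ, x ∈ Set.Ioi (-α) → 0 < x + β := fun x hx => by
    simp only [Set.mem_Ioi] at hx; linarith
  have hfpos : ∀ x ∈ Set.Ioi (-α), 0 < f x := fun x hx =>
    div_pos (Real.Gamma_pos_of_pos (hpos x hx)) (Real.Gamma_pos_of_pos (hposb x hx))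
  -- Strict antitonicity
  have hanti : StrictAntiOn f (Set.Ioi (-α)) := by
    intro x hx y hy hxy
    have h1 := myLogGamma_ineq (a := x + α) (b := x + β) (c := y + α) (d := y + β)
      (hpos x hx) (by linarith) (by linarith) (by linarith) (by linarith) (by ring)
    have hA := Real.Gamma_pos_of_pos (hpos x hx)
    have hB := Real.Gamma_pos_of_pos (hposb x hx)
    have hC := Real.Gamma_pos_of_pos (hpos y hy)
    have hD := Real.Gamma_pos_of_pos (hposb y hy)
    have h2 := Real.exp_lt_exp.2 h1
    rw [Real.exp_add, Real.exp_add, Real.exp_log hB, Real.exp_log hC, Real.exp_log hA,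
      Real.exp_log hD] at h2
    show f y < f x
    rw [hf, div_lt_div_iff₀ hD hB]
    nlinarith [h2]
  -- C¹
  have hC1 : ContDiffOn ℝ 1 f (Set.Ioi (-α)) := by
    intro x hx
    have hga : ContDiffAt ℝ 1 (fun x : ℝ => Real.Gamma (x + α)) x :=
      (myContDiffAt_Gamma (hpos x hx)).comp (f := fun x : ℝ => x + α) x
        ((contDiff_id.add contDiff_const).contDiffAt)
    have hgb : ContDiffAt ℝ 1 (fun x : ℝ => Real.Gamma (x + β)) x :=
      (myContDiffAt_Gamma (hposb x hx)).comp (f := fun x : ℝ => x + β) x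
        ((contDiff_id.add contDiff_const).contDiffAt)
    exact (hga.div hgb (Real.Gamma_pos_of_pos (hposb x hx)).ne').contDiffWithinAt
  -- Tendsto at -α⁺
  have htop : Filter.Tendsto f (nhdsWithin (-α) (Set.Ioi (-α))) Filter.atTop := by
    have hnum : Filter.Tendsto (fun x : ℝ => Real.Gamma (x + α))
        (nhdsWithin (-α) (Set.Ioi (-α))) Filter.atTop := by
      refine myGamma_tendsto_zero.comp ?_
      apply tendsto_nhdsWithin_of_tendsto_nhds_of_eventually_within
      · have h0 : Filter.Tendsto (fun x : ℝ => x + α) (nhds (-α)) (nhds (-α + α)) :=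
          (continuous_add_right α).tendsto (-α)
        rw [neg_add_cancel] at h0
        exact h0.mono_left nhdsWithin_le_nhds
      · filter_upwards [self_mem_nhdsWithin] with x hx
        exact Set.mem_Ioi.2 (by simp only [Set.mem_Ioi] at hx; linarith)
    have hden : Filter.Tendsto (fun x : ℝ => (Real.Gamma (x + β))⁻¹)
        (nhdsWithin (-α) (Set.Ioi (-α))) (nhds (Real.Gamma (-α + β))⁻¹) := by
      have h0 : Filter.Tendsto (fun x : ℝ => x + β) (nhds (-α)) (nhds (-α + β)) :=
        (continuous_add_right β).tendsto (-α)
      have h2 : ContinuousAt Real.Gamma (-α + β) :=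
        (myContDiffAt_Gamma (by linarith)).continuousAt
      exact ((h2.tendsto.comp h0).mono_left nhdsWithin_le_nhds).inv₀
        (Real.Gamma_pos_of_pos (by linarith)).ne'
    have := hnum.atTop_mul_pos (inv_pos.2 (Real.Gamma_pos_of_pos (by linarith : (0:ℝ) < -α + β))) hden
    refine this.congr fun x => ?_
    exact (div_eq_mul_inv _ _).symm
  -- Tendsto at ∞ to 0
  have hzero : Filter.Tendsto f Filter.atTop (nhds 0) := by
    have hbound : Filter.Tendsto (fun x : ℝ => (x + (α - 1)) ^ (α - β)) Filter.atTop (nhds 0) := by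
      have h1 : Filter.Tendsto (fun x : ℝ => x ^ (-(β - α))) Filter.atTop (nhds 0) :=
        tendsto_rpow_neg_atTop (by linarith)
      have h2 : Filter.Tendsto (fun x : ℝ => x + (α - 1)) Filter.atTop Filter.atTop :=
        tendsto_atTop_add_const_right _ _ tendsto_id
      have := h1.comp h2
      simpa [neg_sub, Function.comp_def] using this
    refine tendsto_of_tendsto_of_tendsto_of_le_of_le' tendsto_const_nhds hbound ?_ ?_
    · filter_upwards [Filter.eventually_ge_atTop (2 - α)] with x hx
      have hxa : 0 < x + α := by linarith
      have hxb : 0 < x + β := by linarith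
      exact le_of_lt (div_pos (Real.Gamma_pos_of_pos hxa) (Real.Gamma_pos_of_pos hxb))
    · filter_upwards [Filter.eventually_ge_atTop (2 - α)] with x hx
      have ha1 : (0:ℝ) < x + α - 1 := by linarith
      have hxa : 0 < x + α := by linarith
      have hxb : 0 < x + β := by linarith
      have hA := Real.Gamma_pos_of_pos hxa
      have hB := Real.Gamma_pos_of_pos hxb
      have hslope := Real.convexOn_log_Gamma.slope_mono_adjacent
        (Set.mem_Ioi.2 ha1) (Set.mem_Ioi.2 hxb)
        (by linarith : x + α - 1 < x + α) (by linarith : x + α < x + β)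
      have hΓrec : Real.Gamma (x + α) = (x + α - 1) * Real.Gamma (x + α - 1) := by
        have := Real.Gamma_add_one (ne_of_gt ha1)
        rw [show x + α - 1 + 1 = x + α by ring] at this
        exact this
      have hlog1 : (Real.log ∘ Real.Gamma) (x + α) - (Real.log ∘ Real.Gamma) (x + α - 1)
          = Real.log (x + α - 1) := by
        simp only [Function.comp_apply]
        rw [hΓrec, Real.log_mul (ne_of_gt ha1) (Real.Gamma_pos_of_pos ha1).ne']
        ring
      rw [show x + α - (x + α - 1) = 1 by ring, div_one, hlog1] at hslope
      have hba : x + β - (x + α) = β - α := by ring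
      rw [hba] at hslope
      have hkey : Real.log (Real.Gamma (x + α)) - Real.log (Real.Gamma (x + β))
          ≤ (α - β) * Real.log (x + α - 1) := by
        have h3 := (le_div_iff₀ (by linarith : (0:ℝ) < β - α)).1 hslope
        simp only [Function.comp_apply] at h3
        nlinarith [h3]
      have hfx : f x = Real.exp (Real.log (Real.Gamma (x + α)) - Real.log (Real.Gamma (x + β))) := by
        rw [Real.exp_sub, Real.exp_log hA, Real.exp_log hB]
      rw [hfx, Real.rpow_def_of_pos (by linarith : (0:ℝ) < x + (α - 1))]
      rw [show x + (α - 1) = x + α - 1 by ring]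
      exact Real.exp_le_exp.2 (by nlinarith [hkey])
  -- Bijection
  refine ⟨hanti, hC1, htop, hzero, ?_, hanti.injOn, ?_⟩
  · exact fun x hx => Set.mem_Ioi.2 (hfpos x hx)
  · intro y hy
    have hy0 : (0:ℝ) < y := hy
    obtain ⟨a, hay, haI⟩ := ((htop.eventually_gt_atTop y).and self_mem_nhdsWithin).exists
    obtain ⟨b, hb1, hb2⟩ := ((hzero.eventually_lt_const hy0).and
      (Filter.eventually_ge_atTop a)).exists
    have hbI : b ∈ Set.Ioi (-α) := Set.mem_Ioi.2 (lt_of_lt_of_le haI hb2)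
    have hcont : ContinuousOn f (Set.Icc a b) := by
      refine hC1.continuousOn.mono fun t ht => ?_
      exact Set.mem_Ioi.2 (lt_of_lt_of_le haI ht.1)
    have := intermediate_value_Ioo' hb2 hcont (Set.mem_Ioo.2 ⟨hb1, hay⟩)
    obtain ⟨x, hx, hfx⟩ := this
    exact ⟨x, Set.mem_Ioi.2 (haI.trans hx.1), hfx⟩
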